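/- Let k be a field, G a finite group with |G| invertible in k, and A a finitely generated commutative k-algebra on which G acts by k-algebra automorphisms. Then the invariant ring A^G is a finitely generated k-algebra. -/

import Mathlib

/-!
Every `a : A` is a root of the monic polynomial `∏ g, (X - g • a)`, whose coefficients are
invariant, so `A` is integral, hence module-finite, over `A^G`. Since `A` is of finite type
over the noetherian ring `k`, the Artin–Tate lemma makes `A^G` of finite type over `k`.
-/

/-- The subalgebra of `G`-invariant elements of a `k`-algebra `A`. -/
def fixedSubalgebra (G : Type*) (k A : Type*) [Monoid G] [CommSemiring k] [CommRing A]
    [Algebra k A] [MulSemiringAction G A] [SMulCommClass G k A] : Subalgebra k A where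
  carrier := {a | ∀ g : G, g • a = a}
  mul_mem' := by intro a b ha hb g; rw [smul_mul', ha g, hb g]
  one_mem' := fun g => smul_one g
  add_mem' := by intro a b ha hb g; rw [smul_add, ha g, hb g]
  zero_mem' := fun g => smul_zero g
  algebraMap_mem' := by
    intro r g
    rw [Algebra.algebraMap_eq_smul_one, smul_comm g r (1 : A), smul_one]

instance fixedSubalgebra.isInvariant (G k A : Type*) [Group G] [CommSemiring k] [CommRing A]
    [Algebra k A] [MulSemiringAction G A] [SMulCommClass G k A] :
    Algebra.IsInvariant (fixedSubalgebra G k A) A G :=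
  ⟨fun a ha => ⟨⟨a, ha⟩, rfl⟩⟩

theorem Algebra.FiniteType.of_finite_of_injective (R B C : Type*) [CommRing R]
    [IsNoetherianRing R] [CommRing B] [CommRing C] [Algebra R B] [Algebra B C] [Algebra R C]
    [IsScalarTower R B C] [Algebra.FiniteType R C] [Module.Finite B C]
    (hBC : Function.Injective (algebraMap B C)) : Algebra.FiniteType R B :=
  ⟨fg_of_fg_of_fg R B C Algebra.FiniteType.out Module.Finite.fg_top hBC⟩

theorem invariant_ring_finiteType_general (k G A : Type*) [Field k] [Group G] [Fintype G]
    [CommRing A] [Algebra k A] [Algebra.FiniteType k A]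
    [MulSemiringAction G A] [SMulCommClass G k A] :
    Algebra.FiniteType k (fixedSubalgebra G k A) := by
  set B := fixedSubalgebra G k A
  have : Algebra.IsIntegral B A := Algebra.IsInvariant.isIntegral B A G
  have : Algebra.FiniteType B A := .of_restrictScalars_finiteType k B A
  have : Module.Finite B A := Algebra.IsIntegral.finite
  exact .of_finite_of_injective k B A Subtype.val_injective

/-- Noether's finiteness theorem: if `A` is a finitely generated `k`-algebra and `G` is a
finite group with `|G|` invertible in `k` acting on `A` by `k`-algebra automorphisms, then
the invariant ring `A^G` is a finitely generated `k`-algebra. -/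
theorem invariant_ring_finiteType (k G A : Type*) [Field k] [Group G] [Fintype G]
    [Invertible ((Fintype.card G : k))] [CommRing A] [Algebra k A] [Algebra.FiniteType k A]
    [MulSemiringAction G A] [SMulCommClass G k A] :
    Algebra.FiniteType k (fixedSubalgebra G k A) :=
  invariant_ring_finiteType_general k G A
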